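/- Over any field k, the Chevalley generators x_i(z) and y_i(z) are invertible: for every i ∈ I and z ∈ k, x_i(z) ∘ x_i(−z) = id_{V_k} and y_i(z) ∘ y_i(−z) = id_{V_k}; in particular x_i(z), y_i(z) ∈ GL(V_k). -/

import Mathlib

open scoped RealInnerProductSpace

/-- A finite, reduced, irreducible, crystallographic root system `R` spanning a
finite-dimensional real inner product space `E`, together with a base of simple
roots indexed by `I`, the integral Cartan pairing `pair`, and for each simple
root `αᵢ` and each root `α` not proportional to `αᵢ` the chain lengths
`p i α`, `q i α` (largest `n ≥ 0` with `α + n αᵢ`, resp. `α - n αᵢ`, a root). -/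
structure RootSystemData (E : Type) [NormedAddCommGroup E] [InnerProductSpace ℝ E]
    [FiniteDimensional ℝ E] (I : Type) [Fintype I] : Type where
  R : Set E
  finite : R.Finite
  zero_not_mem : (0 : E) ∉ R
  spans : Submodule.span ℝ R = ⊤
  neg_mem : ∀ α ∈ R, -α ∈ R
  reduced : ∀ α ∈ R, ∀ r : ℝ, r • α ∈ R → r = 1 ∨ r = -1
  pair : E → E → ℤ
  pair_def : ∀ α ∈ R, ∀ β ∈ R, (pair α β : ℝ) * ⟪α, α⟫ = 2 * ⟪α, β⟫
  reflect_mem : ∀ α ∈ R, ∀ β ∈ R, β - (pair α β : ℝ) • α ∈ R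
  irreducible : ∀ R₁ R₂ : Set E, R = R₁ ∪ R₂ →
    (∀ α ∈ R₁, ∀ β ∈ R₂, ⟪α, β⟫ = 0) → R₁ = ∅ ∨ R₂ = ∅
  simple : I → E
  simple_mem : ∀ i, simple i ∈ R
  simple_indep : LinearIndependent ℝ simple
  simple_gen : ∀ α ∈ R,
    (∃ c : I → ℕ, α = ∑ i, (c i : ℝ) • simple i) ∨
    (∃ c : I → ℕ, α = -(∑ i, (c i : ℝ) • simple i))
  p : I → E → ℕ
  q : I → E → ℕ
  p_mem : ∀ i, ∀ α ∈ R, (∀ r : ℝ, α ≠ r • simple i) →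
    ∀ k : ℕ, k ≤ p i α → α + (k : ℝ) • simple i ∈ R
  p_max : ∀ i, ∀ α ∈ R, (∀ r : ℝ, α ≠ r • simple i) →
    α + ((p i α : ℝ) + 1) • simple i ∉ R
  q_mem : ∀ i, ∀ α ∈ R, (∀ r : ℝ, α ≠ r • simple i) →
    ∀ k : ℕ, k ≤ q i α → α - (k : ℝ) • simple i ∈ R
  q_max : ∀ i, ∀ α ∈ R, (∀ r : ℝ, α ≠ r • simple i) →
    α - ((q i α : ℝ) + 1) • simple i ∉ R

noncomputable section

variable {E : Type} [NormedAddCommGroup E] [InnerProductSpace ℝ E]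
  [FiniteDimensional ℝ E] {I : Type} [Fintype I]
  {k : Type} [Field k]

/-- The `k`-vector space `V_k` with basis `{X_α : α ∈ R} ∪ {t_i : i ∈ I}`. -/
abbrev Vk (D : RootSystemData E I) (k : Type) [Field k] : Type :=
  ({x : E // x ∈ D.R} ⊕ I) →₀ k

/-- The basis vector `X_α` of `V_k`, for a root `α`. -/
def Xk (D : RootSystemData E I) (k : Type) [Field k]
    (a : {x : E // x ∈ D.R}) : Vk D k :=
  Finsupp.single (Sum.inl a) 1

/-- The basis vector `t_j` of `V_k`, for `j ∈ I`. -/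
def tk (D : RootSystemData E I) (k : Type) [Field k] (j : I) : Vk D k :=
  Finsupp.single (Sum.inr j) 1

open Classical in
/-- The Chevalley generator `x_i(z)` on `V_k`, defined on basis vectors by the
integral exponential formulas (with the convention `p_{i,±αᵢ} = q_{i,±αᵢ} = 0`). -/
def xop (D : RootSystemData E I) (k : Type) [Field k] (i : I) (z : k) :
    Vk D k →ₗ[k] Vk D k :=
  Finsupp.lift (Vk D k) k _ fun b =>
    match b with
    | Sum.inl a =>
        if (a : E) = -(D.simple i) then
          Xk D k a + z • tk D k i + z ^ 2 • Xk D k ⟨D.simple i, D.simple_mem i⟩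
        else if (a : E) = D.simple i then Xk D k a
        else
          ∑ m ∈ Finset.range (D.p i (a : E) + 1),
            ((((D.q i (a : E) + m).factorial /
                ((D.q i (a : E)).factorial * m.factorial) : ℕ) : k) * z ^ m) •
              (if h : (a : E) + (m : ℝ) • D.simple i ∈ D.R then
                Xk D k ⟨(a : E) + (m : ℝ) • D.simple i, h⟩ else 0)
    | Sum.inr j =>
        tk D k j + (((|D.pair (D.simple j) (D.simple i)| : ℤ) : k) * z) •
          Xk D k ⟨D.simple i, D.simple_mem i⟩

open Classical in
/-- The Chevalley generator `y_i(z)` on `V_k`, defined on basis vectors by the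
integral exponential formulas (with the convention `p_{i,±αᵢ} = q_{i,±αᵢ} = 0`). -/
def yop (D : RootSystemData E I) (k : Type) [Field k] (i : I) (z : k) :
    Vk D k →ₗ[k] Vk D k :=
  Finsupp.lift (Vk D k) k _ fun b =>
    match b with
    | Sum.inl a =>
        if (a : E) = D.simple i then
          Xk D k a + z • tk D k i +
            z ^ 2 • Xk D k ⟨-(D.simple i), D.neg_mem (D.simple i) (D.simple_mem i)⟩
        else if (a : E) = -(D.simple i) then Xk D k a
        else
          ∑ m ∈ Finset.range (D.q i (a : E) + 1),
            ((((D.p i (a : E) + m).factorial /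
                ((D.p i (a : E)).factorial * m.factorial) : ℕ) : k) * z ^ m) •
              (if h : (a : E) - (m : ℝ) • D.simple i ∈ D.R then
                Xk D k ⟨(a : E) - (m : ℝ) • D.simple i, h⟩ else 0)
    | Sum.inr j =>
        tk D k j + (((|D.pair (D.simple j) (D.simple i)| : ℤ) : k) * z) •
          Xk D k ⟨-(D.simple i), D.neg_mem (D.simple i) (D.simple_mem i)⟩


/-! On the `αᵢ`-string through a root `α` not proportional to `αᵢ`, `x_i(z)` sends `X_{α+mαᵢ}`
to `∑ₙ C(q+n, n-m) zⁿ⁻ᵐ X_{α+nαᵢ}` (`p`, `q` those of `α`, because shifting `α` along the string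
shifts `p` and `q` by opposite amounts). The coefficient of `X_{α+nαᵢ}` in `x_i(z) x_i(-z) X_α` is
therefore `zⁿ C(q+n, q) ∑ₘ (-1)ᵐ C(n, m) = δₙ₀`, an identity over `ℤ`, hence over every field.
On `X_{±αᵢ}` and `tⱼ` the check is direct, using `⟨αᵢ∨, αᵢ⟩ = 2`. Finally `y_i(z)` is `x_i(z)`
for the opposite base `-Δ`, which exchanges `p` and `q`. -/

section Binomial

open Finset

lemma Nat.add_choose_mul_add_choose_sub (q : ℕ) {m n : ℕ} (hm : m ≤ n) :
    (q + m).choose m * (q + n).choose (n - m) = (q + n).choose q * n.choose m := by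
  have h := Nat.choose_mul (n := q + n) (k := q + m) (s := q) (by omega)
  rw [Nat.add_sub_cancel_left, Nat.add_sub_cancel_left] at h
  rw [← Nat.choose_symm_add, Nat.choose_symm_of_eq_add (by omega : q + n = (n - m) + (q + m)),
    mul_comm, h]

variable {R M : Type*} [CommRing R] [AddCommGroup M] [Module R M]

lemma sum_range_add_choose_mul_neg_pow_mul (q n : ℕ) (z : R) :
    ∑ m ∈ range (n + 1), ((q + m).choose m * (-z) ^ m) * ((q + n).choose (n - m) * z ^ (n - m))
      = if n = 0 then 1 else 0 := by
  have hterm : ∀ m ∈ range (n + 1),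
      ((q + m).choose m * (-z) ^ m) * ((q + n).choose (n - m) * z ^ (n - m))
        = ((q + n).choose q * z ^ n : R) * (((-1) ^ m * n.choose m : ℤ) : R) := by
    intro m hm
    have hm : m ≤ n := Nat.lt_succ_iff.mp (mem_range.mp hm)
    have hchoose := congrArg (Nat.cast : ℕ → R) (Nat.add_choose_mul_add_choose_sub q hm)
    push_cast at hchoose ⊢
    rw [neg_pow, ← pow_sub_mul_pow z hm]
    linear_combination ((-1) ^ m * z ^ (n - m) * z ^ m) * hchoose
  rw [sum_congr rfl hterm, ← mul_sum, ← Int.cast_sum, Int.alternating_sum_range_choose]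
  split_ifs with hn <;> simp [hn]

lemma sum_range_smul_sum_Ico_add_choose (p q : ℕ) (z : R) (X : ℕ → M) :
    ∑ m ∈ range (p + 1), ((q + m).choose m * (-z) ^ m : R) •
      ∑ n ∈ Ico m (p + 1), ((q + n).choose (n - m) * z ^ (n - m) : R) • X n = X 0 := by
  simp only [smul_sum, smul_smul]
  rw [range_eq_Ico, sum_Ico_Ico_comm]
  simp only [← sum_smul, ← range_eq_Ico, sum_range_add_choose_mul_neg_pow_mul, ite_smul,
    one_smul, zero_smul, sum_ite_eq', mem_range]
  simp

end Binomial

lemma LinearMap.bijective_of_comp_neg_eq_id {R M G : Type*} [Semiring R] [AddCommMonoid M]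
    [Module R M] [InvolutiveNeg G] {f : G → M →ₗ[R] M} (hf : ∀ z, f z ∘ₗ f (-z) = LinearMap.id)
    (z : G) : Function.Bijective (f z) :=
  Function.bijective_iff_has_inverse.mpr ⟨f (-z),
    fun x => by simpa using LinearMap.congr_fun (hf (-z)) x, LinearMap.congr_fun (hf z)⟩

namespace RootSystemData

variable (D : RootSystemData E I)

lemma simple_ne_zero (i : I) : D.simple i ≠ 0 :=
  fun h => D.zero_not_mem (h ▸ D.simple_mem i)

lemma simple_ne_neg_simple (i : I) : D.simple i ≠ -D.simple i := by
  intro h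
  have h2 : (2 : ℝ) • D.simple i = 0 := by rw [two_smul]; nth_rewrite 2 [h]; simp
  exact D.simple_ne_zero i ((smul_eq_zero.mp h2).resolve_left two_ne_zero)

lemma pair_simple_self (i : I) : D.pair (D.simple i) (D.simple i) = 2 := by
  have h0 : ⟪D.simple i, D.simple i⟫ ≠ 0 := inner_self_ne_zero.mpr (D.simple_ne_zero i)
  have h := D.pair_def _ (D.simple_mem i) _ (D.simple_mem i)
  exact_mod_cast (mul_right_cancel₀ h0 h : (D.pair (D.simple i) (D.simple i) : ℝ) = 2)

variable {D}

lemma ne_smul_simple_of_ne {i : I} {α : E} (hα : α ∈ D.R) (h₁ : α ≠ D.simple i)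
    (h₂ : α ≠ -D.simple i) (r : ℝ) : α ≠ r • D.simple i := by
  rintro rfl
  rcases D.reduced _ (D.simple_mem i) r hα with rfl | rfl
  · exact h₁ (one_smul _ _)
  · exact h₂ (neg_one_smul _ _)

lemma add_smul_simple_ne_smul_simple {i : I} {α : E}
    (hnp : ∀ r : ℝ, α ≠ r • D.simple i) (t r : ℝ) :
    α + t • D.simple i ≠ r • D.simple i :=
  fun h => hnp (r - t) (by rw [sub_smul, ← h]; abel)

lemma p_eq_of_chain {i : I} {α : E} (hα : α ∈ D.R) (hnp : ∀ r : ℝ, α ≠ r • D.simple i)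
    {n : ℕ} (hmem : ∀ j : ℕ, j ≤ n → α + (j : ℝ) • D.simple i ∈ D.R)
    (hmax : α + ((n : ℝ) + 1) • D.simple i ∉ D.R) : D.p i α = n := by
  refine le_antisymm (not_lt.mp fun h => hmax ?_) (not_lt.mp fun h => D.p_max i α hα hnp ?_)
  · exact_mod_cast D.p_mem i α hα hnp (n + 1) h
  · exact_mod_cast hmem (D.p i α + 1) h

lemma q_eq_of_chain {i : I} {α : E} (hα : α ∈ D.R) (hnp : ∀ r : ℝ, α ≠ r • D.simple i)
    {n : ℕ} (hmem : ∀ j : ℕ, j ≤ n → α - (j : ℝ) • D.simple i ∈ D.R)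
    (hmax : α - ((n : ℝ) + 1) • D.simple i ∉ D.R) : D.q i α = n := by
  refine le_antisymm (not_lt.mp fun h => hmax ?_) (not_lt.mp fun h => D.q_max i α hα hnp ?_)
  · exact_mod_cast D.q_mem i α hα hnp (n + 1) h
  · exact_mod_cast hmem (D.q i α + 1) h

lemma p_add_smul_simple {i : I} {α : E} (hα : α ∈ D.R) (hnp : ∀ r : ℝ, α ≠ r • D.simple i)
    {m : ℕ} (hm : m ≤ D.p i α) :
    D.p i (α + (m : ℝ) • D.simple i) = D.p i α - m := by
  refine p_eq_of_chain (D.p_mem i α hα hnp m hm) (add_smul_simple_ne_smul_simple hnp _)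
    (fun j hj => ?_) ?_
  · convert D.p_mem i α hα hnp (m + j) (by omega) using 1
    push_cast; module
  · convert D.p_max i α hα hnp using 2
    push_cast [Nat.cast_sub hm]; module

lemma q_add_smul_simple {i : I} {α : E} (hα : α ∈ D.R) (hnp : ∀ r : ℝ, α ≠ r • D.simple i)
    {m : ℕ} (hm : m ≤ D.p i α) :
    D.q i (α + (m : ℝ) • D.simple i) = D.q i α + m := by
  refine q_eq_of_chain (D.p_mem i α hα hnp m hm) (add_smul_simple_ne_smul_simple hnp _)
    (fun j hj => ?_) ?_
  · rcases le_total j m with hjm | hmj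
    · convert D.p_mem i α hα hnp (m - j) (by omega) using 1
      push_cast [Nat.cast_sub hjm]; module
    · convert D.q_mem i α hα hnp (j - m) (by omega) using 1
      push_cast [Nat.cast_sub hmj]; module
  · convert D.q_max i α hα hnp using 2
    push_cast; module

end RootSystemData

section ChevalleyX

open Finset

open Classical in
def stringX (D : RootSystemData E I) (k : Type) [Field k] (i : I) (α : E) (n : ℕ) : Vk D k :=
  if h : α + (n : ℝ) • D.simple i ∈ D.R then Xk D k ⟨α + (n : ℝ) • D.simple i, h⟩ else 0

variable {D : RootSystemData E I} {i : I}

lemma stringX_zero {α : E} (hα : α ∈ D.R) : stringX D k i α 0 = Xk D k ⟨α, hα⟩ := by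
  rw [stringX, dif_pos (by simpa using hα)]
  simp

lemma stringX_add_smul_simple (α : E) (m n : ℕ) :
    stringX D k i (α + (m : ℝ) • D.simple i) n = stringX D k i α (m + n) := by
  have e : α + (m : ℝ) • D.simple i + (n : ℝ) • D.simple i =
      α + ((m + n : ℕ) : ℝ) • D.simple i := by
    push_cast; module
  rw [stringX, stringX, e]

variable (z : k)

lemma xop_tk (j : I) :
    xop D k i z (tk D k j) = tk D k j + (((|D.pair (D.simple j) (D.simple i)| : ℤ) : k) * z) •
      Xk D k ⟨D.simple i, D.simple_mem i⟩ := by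
  rw [xop, Finsupp.lift_apply, tk, Finsupp.sum_single_index (by simp), one_smul]
  rfl

lemma xop_Xk_of_eq_neg_simple {a : {x : E // x ∈ D.R}} (ha : (a : E) = -D.simple i) :
    xop D k i z (Xk D k a) =
      Xk D k a + z • tk D k i + z ^ 2 • Xk D k ⟨D.simple i, D.simple_mem i⟩ := by
  rw [xop, Finsupp.lift_apply, Xk, Finsupp.sum_single_index (by simp), one_smul]
  exact if_pos ha

lemma xop_Xk_of_eq_simple {a : {x : E // x ∈ D.R}} (ha : (a : E) = D.simple i) :
    xop D k i z (Xk D k a) = Xk D k a := by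
  have hne : (a : E) ≠ -D.simple i := ha ▸ D.simple_ne_neg_simple i
  rw [xop, Finsupp.lift_apply, Xk, Finsupp.sum_single_index (by simp), one_smul]
  exact (if_neg hne).trans (if_pos ha)

lemma xop_Xk_of_ne_smul_simple {a : {x : E // x ∈ D.R}}
    (hnp : ∀ r : ℝ, (a : E) ≠ r • D.simple i) :
    xop D k i z (Xk D k a) = ∑ m ∈ range (D.p i a + 1),
      ((D.q i a + m).choose m * z ^ m : k) • stringX D k i a m := by
  have h₁ : (a : E) ≠ -D.simple i := by simpa using hnp (-1)
  have h₂ : (a : E) ≠ D.simple i := by simpa using hnp 1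
  rw [xop, Finsupp.lift_apply, Xk, Finsupp.sum_single_index (by simp), one_smul]
  refine (if_neg h₁).trans ((if_neg h₂).trans (sum_congr rfl fun m _ => ?_))
  rw [Nat.add_choose]
  rfl

lemma xop_stringX {α : E} (hα : α ∈ D.R) (hnp : ∀ r : ℝ, α ≠ r • D.simple i) {m : ℕ}
    (hm : m ≤ D.p i α) :
    xop D k i z (stringX D k i α m) = ∑ n ∈ Ico m (D.p i α + 1),
      ((D.q i α + n).choose (n - m) * z ^ (n - m) : k) • stringX D k i α n := by
  have hβ := D.p_mem i α hα hnp m hm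
  rw [stringX, dif_pos hβ, xop_Xk_of_ne_smul_simple z (D.add_smul_simple_ne_smul_simple hnp _),
    D.p_add_smul_simple hα hnp hm, D.q_add_smul_simple hα hnp hm, sum_Ico_eq_sum_range,
    show D.p i α + 1 - m = D.p i α - m + 1 by omega]
  refine sum_congr rfl fun j _ => ?_
  rw [stringX_add_smul_simple, Nat.add_sub_cancel_left, add_assoc]

lemma xop_xop_neg_tk (j : I) : xop D k i z (xop D k i (-z) (tk D k j)) = tk D k j := by
  rw [xop_tk, map_add, map_smul, xop_tk, xop_Xk_of_eq_simple z rfl]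
  module

lemma xop_xop_neg_Xk (a : {x : E // x ∈ D.R}) :
    xop D k i z (xop D k i (-z) (Xk D k a)) = Xk D k a := by
  by_cases h₁ : (a : E) = -D.simple i
  · have hpair : ((|D.pair (D.simple i) (D.simple i)| : ℤ) : k) = 2 := by
      rw [D.pair_simple_self]; norm_num
    rw [xop_Xk_of_eq_neg_simple _ h₁, map_add, map_add, map_smul, map_smul,
      xop_Xk_of_eq_neg_simple _ h₁, xop_tk, hpair, xop_Xk_of_eq_simple z rfl]
    module
  by_cases h₂ : (a : E) = D.simple i
  · rw [xop_Xk_of_eq_simple _ h₂, xop_Xk_of_eq_simple _ h₂]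
  have hnp := D.ne_smul_simple_of_ne a.2 h₂ h₁
  have h₀ := xop_stringX (-z) a.2 hnp (Nat.zero_le _)
  simp only [stringX_zero a.2, ← range_eq_Ico, Nat.sub_zero] at h₀
  rw [h₀, map_sum]
  simp only [map_smul]
  rw [sum_congr rfl fun m hm => by
      rw [xop_stringX z a.2 hnp (Nat.lt_succ_iff.mp (mem_range.mp hm))],
    sum_range_smul_sum_Ico_add_choose, stringX_zero a.2]

end ChevalleyX

theorem xop_comp_xop_neg (D : RootSystemData E I) (i : I) (z : k) :
    xop D k i z ∘ₗ xop D k i (-z) = LinearMap.id := by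
  refine Finsupp.lhom_ext' fun b => LinearMap.ext_ring ?_
  rcases b with a | j
  · exact xop_xop_neg_Xk z a
  · exact xop_xop_neg_tk z j

namespace RootSystemData

abbrev opposite (D : RootSystemData E I) : RootSystemData E I where
  R := D.R
  finite := D.finite
  zero_not_mem := D.zero_not_mem
  spans := D.spans
  neg_mem := D.neg_mem
  reduced := D.reduced
  pair α β := D.pair (-α) (-β)
  pair_def α hα β hβ := by
    simpa using D.pair_def (-α) (D.neg_mem α hα) (-β) (D.neg_mem β hβ)
  reflect_mem α hα β hβ := by
    convert D.neg_mem _ (D.reflect_mem (-α) (D.neg_mem α hα) (-β) (D.neg_mem β hβ)) using 1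
    module
  irreducible := D.irreducible
  simple i := -D.simple i
  simple_mem i := D.neg_mem _ (D.simple_mem i)
  simple_indep := D.simple_indep.neg
  simple_gen α hα := by
    simpa [Finset.sum_neg_distrib, or_comm] using D.simple_gen α hα
  p := D.q
  q := D.p
  p_mem i α hα hnp j hj := by
    simpa [sub_eq_add_neg] using D.q_mem i α hα (fun r => by simpa using hnp (-r)) j hj
  p_max i α hα hnp := by
    simpa [sub_eq_add_neg] using D.q_max i α hα (fun r => by simpa using hnp (-r))
  q_mem i α hα hnp j hj := by
    simpa [sub_eq_add_neg] using D.p_mem i α hα (fun r => by simpa using hnp (-r)) j hj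
  q_max i α hα hnp := by
    simpa [sub_eq_add_neg] using D.p_max i α hα (fun r => by simpa using hnp (-r))

end RootSystemData

open Classical in
lemma yop_eq_xop_opposite (D : RootSystemData E I) (i : I) (z : k) :
    yop D k i z = xop D.opposite k i z := by
  refine Finsupp.lhom_ext fun b c => ?_
  rw [yop, xop, Finsupp.lift_apply, Finsupp.lift_apply, Finsupp.sum_single_index (by simp),
    Finsupp.sum_single_index (by simp)]
  congr 1
  rcases b with a | j
  · dsimp only
    rw [neg_neg]
    refine if_congr Iff.rfl rfl (if_congr Iff.rfl rfl (Finset.sum_congr rfl fun m _ => ?_))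
    rw [smul_neg, ← sub_eq_add_neg]
    rfl
  · dsimp only
    rw [neg_neg, neg_neg]
    rfl

theorem yop_comp_yop_neg (D : RootSystemData E I) (i : I) (z : k) :
    yop D k i z ∘ₗ yop D k i (-z) = LinearMap.id := by
  rw [yop_eq_xop_opposite, yop_eq_xop_opposite]
  exact xop_comp_xop_neg D.opposite i z

/-- Over any field `k`, the Chevalley generators are invertible:
`x_i(z) ∘ x_i(-z) = id` and `y_i(z) ∘ y_i(-z) = id`; in particular
`x_i(z)` and `y_i(z)` are linear automorphisms of `V_k`. -/
theorem stmt19 {E : Type} [NormedAddCommGroup E] [InnerProductSpace ℝ E]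
    [FiniteDimensional ℝ E] {I : Type} [Fintype I]
    (D : RootSystemData E I) (k : Type) [Field k] (i : I) (z : k) :
    xop D k i z ∘ₗ xop D k i (-z) = LinearMap.id ∧
    yop D k i z ∘ₗ yop D k i (-z) = LinearMap.id ∧
    Function.Bijective (xop D k i z) ∧
    Function.Bijective (yop D k i z) :=
  ⟨xop_comp_xop_neg D i z, yop_comp_yop_neg D i z,
    LinearMap.bijective_of_comp_neg_eq_id (f := xop D k i) (xop_comp_xop_neg D i) z,
    LinearMap.bijective_of_comp_neg_eq_id (f := yop D k i) (yop_comp_yop_neg D i) z⟩
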